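/- arXiv:0902.2524 — 5 statements merged into one kernel-verified Lean document; each statement's English description precedes it below -/
import Mathlib

section
/- For all x ∈ (0, ∞), ln(x + 1/2) − 1/x < ψ(x) < ln(x + e^{−γ}) − 1/x, where γ is the Euler–Mascheroni constant. -/
/-!
The recurrence `ψ(x+1) = ψ(x) + 1/x` and the convexity of `log Γ` (which squeezes `ψ(x+1)`
between `log x` and `log (x+1)`) give `ψ(x+1) - log (x+t) → 0`. So a function of this shape that
strictly decreases under `x ↦ x+1` is positive; for `t = 1/2` the decrease is the inequality
`1/y < log (y+1/2) - log (y-1/2)`, and this is the lower bound.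

Summing the recurrence gives `ψ(x) = -γ + ∑ (1/(n+1) - 1/(n+x))`, hence `ψ'(x) = ∑ 1/(x+n)²`.
For the upper bound, `F(x) = ψ(x+1) - log (x + e^{-γ})` vanishes at `0` and at infinity, and
`F'(x) = ψ'(x+1) - 1/(x + e^{-γ})` changes sign at most once, from `-` to `+`, because
`1/ψ'(z) - z` is strictly decreasing, i.e. `ψ'(z)² > -ψ''(z)`. That inequality again follows from
the "decreasing step, limit zero" argument. Hence `F < 0` on `(0, ∞)`.
-/

open Real Filter Set

/-- The digamma (psi) function: the logarithmic derivative of the gamma function. -/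
noncomputable def psi (x : ℝ) : ℝ := deriv (fun t : ℝ => Real.log (Real.Gamma t)) x

open Topology

lemma pos_of_add_one_lt_of_tendsto_zero {g : ℝ → ℝ} {x : ℝ}
    (hstep : ∀ z, x ≤ z → g (z + 1) < g z)
    (hlim : Tendsto (fun n : ℕ => g (x + n)) atTop (𝓝 0)) : 0 < g x := by
  have hanti : StrictAnti fun n : ℕ => g (x + n) := strictAnti_nat_of_succ_lt fun n => by
    simpa [add_assoc] using hstep (x + n) (le_add_of_nonneg_right n.cast_nonneg)
  simpa using (hanti.antitone.le_of_tendsto hlim 1).trans_lt (hanti Nat.zero_lt_one)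

lemma neg_of_deriv_sign_change {F F' : ℝ → ℝ} (hF : ∀ x, 0 ≤ x → HasDerivAt F (F' x) x)
    (h0 : F 0 = 0) (hlim : Tendsto F atTop (𝓝 0))
    (hsign : ∀ x y, 0 < x → x < y → 0 ≤ F' x → 0 < F' y) {x : ℝ} (hx : 0 < x) : F x < 0 := by
  by_cases hturn : ∃ y ∈ Ioo 0 x, 0 ≤ F' y
  · obtain ⟨y, ⟨hy0, hyx⟩, hFy⟩ := hturn
    have hmono : StrictMonoOn F (Ici x) := by
      refine strictMonoOn_of_deriv_pos (convex_Ici x)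
        (fun z (hz : x ≤ z) => (hF z (by linarith)).continuousAt.continuousWithinAt)
        fun z hz => ?_
      rw [interior_Ici, mem_Ioi] at hz
      rw [(hF z (by linarith)).deriv]
      exact hsign y z hy0 (by linarith) hFy
    have hle : F (x + 1) ≤ 0 := by
      refine ge_of_tendsto hlim ?_
      filter_upwards [eventually_ge_atTop (x + 1)] with z hz
      exact hmono.monotoneOn (by simp) (show x ≤ z by linarith) hz
    linarith [hmono self_mem_Ici (show x ≤ x + 1 by linarith) (lt_add_one x)]
  · push Not at hturn
    have hanti : StrictAntiOn F (Icc 0 x) := by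
      refine strictAntiOn_of_deriv_neg (convex_Icc 0 x)
        (fun z hz => (hF z hz.1).continuousAt.continuousWithinAt) fun z hz => ?_
      rw [interior_Icc] at hz
      rw [(hF z hz.1.le).deriv]
      exact hturn z hz
    simpa [h0] using hanti (left_mem_Icc.2 hx.le) (right_mem_Icc.2 hx.le) hx

lemma inv_lt_log_add_half_sub_log_sub_half {y : ℝ} (hy : 1 / 2 < y) :
    y⁻¹ < log (y + 1 / 2) - log (y - 1 / 2) := by
  have ha : 0 < y - 1 / 2 := by linarith
  have hsum := hasSum_log_one_add_inv ha
  rw [inv_eq_one_div, one_add_div ha.ne', show y - 1 / 2 + 1 = y + 1 / 2 by ring,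
    log_div (by positivity) ha.ne', show 2 * (y - 1 / 2) + 1 = 2 * y by ring] at hsum
  refine lt_of_lt_of_le ?_ (sum_le_hasSum (Finset.range 2) (fun _ _ => by positivity) hsum)
  simp only [Finset.sum_range_succ, Finset.sum_range_zero]
  norm_num
  have : 0 < y⁻¹ := by positivity
  nlinarith [pow_pos this 3]

section Digamma

variable {x : ℝ}

lemma hasDerivAt_log_Gamma (hx : 0 < x) :
    HasDerivAt (fun t => log (Gamma t)) (psi x) x :=
  ((differentiableAt_Gamma fun m => by linarith [(m.cast_nonneg : (0:ℝ) ≤ m)]).log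
    (Gamma_pos_of_pos hx).ne').hasDerivAt

lemma psi_one : psi 1 = -eulerMascheroniConstant := by
  rw [eulerMascheroniConstant_eq_neg_deriv, neg_neg, psi,
    deriv.log (differentiableAt_Gamma fun m => by linarith [(m.cast_nonneg : (0:ℝ) ≤ m)])
      (by simp), Gamma_one, div_one]

lemma psi_add_one (hx : 0 < x) : psi (x + 1) = psi x + 1 / x := by
  have hshift : HasDerivAt (fun t => log (Gamma (t + 1))) (psi (x + 1)) x :=
    (hasDerivAt_log_Gamma (by linarith)).comp_add_const x 1
  have hrec : HasDerivAt (fun t => log (Gamma t) + log t) (psi x + 1 / x) x := by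
    rw [one_div]; exact (hasDerivAt_log_Gamma hx).add (hasDerivAt_log hx.ne')
  refine hshift.unique (hrec.congr_of_eventuallyEq ?_)
  filter_upwards [eventually_gt_nhds hx] with t ht
  rw [Gamma_add_one ht.ne', log_mul ht.ne' (Gamma_pos_of_pos ht).ne', add_comm]

lemma psi_add_nat (hx : 0 < x) (N : ℕ) :
    psi (x + N) = psi x + ∑ n ∈ Finset.range N, 1 / (x + n) := by
  induction N with
  | zero => simp
  | succ N ih =>
    rw [Nat.cast_succ, ← add_assoc, psi_add_one (by positivity), ih, Finset.sum_range_succ,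
      add_assoc]

lemma log_Gamma_add_one_sub_log_Gamma (hx : 0 < x) :
    log (Gamma (x + 1)) - log (Gamma x) = log x := by
  rw [Gamma_add_one hx.ne', log_mul hx.ne' (Gamma_pos_of_pos hx).ne']; ring

lemma log_le_psi_add_one (hx : 0 < x) : log x ≤ psi (x + 1) := by
  have := convexOn_log_Gamma.slope_le_of_hasDerivAt (mem_Ioi.2 hx)
    (mem_Ioi.2 (by linarith : (0:ℝ) < x + 1)) (lt_add_one x) (hasDerivAt_log_Gamma (by linarith))
  rwa [slope_def_field, add_sub_cancel_left, div_one, Function.comp_apply, Function.comp_apply,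
    log_Gamma_add_one_sub_log_Gamma hx] at this

lemma psi_le_log (hx : 0 < x) : psi x ≤ log x := by
  have := convexOn_log_Gamma.le_slope_of_hasDerivAt (mem_Ioi.2 hx)
    (mem_Ioi.2 (by linarith : (0:ℝ) < x + 1)) (lt_add_one x) (hasDerivAt_log_Gamma hx)
  rwa [slope_def_field, add_sub_cancel_left, div_one, Function.comp_apply, Function.comp_apply,
    log_Gamma_add_one_sub_log_Gamma hx] at this

lemma tendsto_psi_sub_log (t : ℝ) : Tendsto (fun x => psi x - log (x + t)) atTop (𝓝 0) := by
  have hlog (a : ℝ) : Tendsto (fun x => log (x + a) - log (x + t)) atTop (𝓝 0) := by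
    simpa using (tendsto_log_comp_add_sub_log a).sub (tendsto_log_comp_add_sub_log t)
  refine tendsto_of_tendsto_of_tendsto_of_le_of_le' (hlog (-1)) (hlog 0) ?_ ?_
  · filter_upwards [eventually_gt_atTop 1] with x hx
    simpa [← sub_eq_add_neg] using log_le_psi_add_one (by linarith : 0 < x - 1)
  · filter_upwards [eventually_gt_atTop 0] with x hx
    simpa using psi_le_log hx

end Digamma

-- The Hurwitz zeta value `ζ(k, y)`; the series diverges for `k ≤ 1`, where the `tsum` is `0`.
noncomputable def hurwitzSeries (k : ℕ) (y : ℝ) : ℝ := ∑' n : ℕ, 1 / (y + n) ^ k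

section hurwitzSeries

variable {k : ℕ} {y : ℝ}

lemma summable_one_div_add_pow (hk : 2 ≤ k) (hy : 0 < y) :
    Summable fun n : ℕ => 1 / (y + n) ^ k := by
  refine ((Real.summable_one_div_nat_add_rpow y k).2 (by exact_mod_cast hk)).congr fun n => ?_
  rw [abs_of_pos (by positivity), Real.rpow_natCast, add_comm]

lemma one_div_add_pow_le {a z : ℝ} (ha : 0 < a) (haz : a ≤ z) (n m : ℕ) :
    1 / (z + n) ^ m ≤ 1 / (a + n) ^ m := by
  gcongr

lemma hasDerivAt_one_div_add_pow (k : ℕ) {c : ℝ} (h : 0 < y + c) :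
    HasDerivAt (fun z => 1 / (z + c) ^ k) (-(k * (1 / (y + c) ^ (k + 1)))) y := by
  have hf : (fun z => 1 / (z + c) ^ k) = fun z => (z + c) ^ (-(k : ℤ)) := by
    ext z; simp
  rw [hf]
  refine ((hasDerivAt_zpow (-(k : ℤ)) (y + c) (Or.inl h.ne')).comp_add_const y c).congr_deriv ?_
  rw [show -(k : ℤ) - 1 = -((k + 1 : ℕ) : ℤ) by push_cast; ring, zpow_neg, zpow_natCast]
  push_cast; ring

lemma hurwitzSeries_pos (hk : 2 ≤ k) (hy : 0 < y) : 0 < hurwitzSeries k y :=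
  (summable_one_div_add_pow hk hy).tsum_pos (fun _ => by positivity) 0 (by positivity)

lemma hurwitzSeries_eq_add (hk : 2 ≤ k) (hy : 0 < y) :
    hurwitzSeries k y = 1 / y ^ k + hurwitzSeries k (y + 1) := by
  rw [hurwitzSeries, (summable_one_div_add_pow hk hy).tsum_eq_zero_add, hurwitzSeries]
  simp [add_assoc, add_comm (1 : ℝ)]

lemma tendsto_hurwitzSeries_add_nat (k : ℕ) (y : ℝ) :
    Tendsto (fun N : ℕ => hurwitzSeries k (y + N)) atTop (𝓝 0) := by
  refine (tendsto_sum_nat_add fun n : ℕ => 1 / (y + n) ^ k).congr fun N => ?_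
  simp [hurwitzSeries, add_assoc, add_comm (N : ℝ)]

lemma hasDerivAt_hurwitzSeries (hk : 2 ≤ k) (hy : 0 < y) :
    HasDerivAt (hurwitzSeries k) (-(k * hurwitzSeries (k + 1) y)) y := by
  have ha : 0 < y / 2 := half_pos hy
  have hmem : y ∈ Ioi (y / 2) := by simp only [mem_Ioi]; linarith
  have hpos (n : ℕ) {z : ℝ} (hz : y / 2 < z) : 0 < z + n := by
    linarith [(n.cast_nonneg : (0:ℝ) ≤ n)]
  have h := hasDerivAt_tsum_of_isPreconnected (g := fun (n : ℕ) (z : ℝ) => 1 / (z + n) ^ k)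
    ((summable_one_div_add_pow (by omega : 2 ≤ k + 1) ha).mul_left (k : ℝ))
    isOpen_Ioi isPreconnected_Ioi
    (fun n z (hz : y / 2 < z) => hasDerivAt_one_div_add_pow k (hpos n hz))
    (fun n z (hz : y / 2 < z) => by
      rw [norm_neg, norm_mul, Real.norm_natCast,
        Real.norm_of_nonneg (by have := hpos n hz; positivity)]
      exact mul_le_mul_of_nonneg_left (one_div_add_pow_le ha hz.le n (k + 1)) k.cast_nonneg)
    hmem (summable_one_div_add_pow hk hy) hmem
  rwa [tsum_neg, tsum_mul_left] at h

end hurwitzSeries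

section DigammaSeries

variable {x : ℝ}

lemma summable_digamma_terms (hx : 0 < x) :
    Summable fun n : ℕ => 1 / ((n : ℝ) + 1) - 1 / (x + n) := by
  have hbound : ∀ᶠ n : ℕ in atTop,
      ‖1 / ((n : ℝ) + 1) - 1 / (x + n)‖ ≤ |x - 1| * (1 / (n : ℝ) ^ 2) := by
    filter_upwards [eventually_ge_atTop 1] with n hn
    have hn' : (1 : ℝ) ≤ n := by exact_mod_cast hn
    rw [Real.norm_eq_abs, div_sub_div _ _ (by positivity) (by positivity), abs_div, one_mul,
      mul_one, abs_of_pos (by positivity : (0:ℝ) < (n + 1) * (x + n)),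
      show x + n - (n + 1) = x - 1 by ring, mul_one_div]
    gcongr
    nlinarith
  exact .of_norm_bounded_eventually_nat ((summable_one_div_nat_pow.2 one_lt_two).mul_left _) hbound

lemma hasDerivAt_tsum_digamma_terms (hx : 0 < x) :
    HasDerivAt (fun z => ∑' n : ℕ, (1 / ((n : ℝ) + 1) - 1 / (z + n))) (hurwitzSeries 2 x) x := by
  have ha : 0 < x / 2 := half_pos hx
  have hmem : x ∈ Ioi (x / 2) := by simp only [mem_Ioi]; linarith
  have hpos (n : ℕ) {z : ℝ} (hz : x / 2 < z) : 0 < z + n := by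
    linarith [(n.cast_nonneg : (0:ℝ) ≤ n)]
  have h := hasDerivAt_tsum_of_isPreconnected
    (g := fun (n : ℕ) (z : ℝ) => 1 / ((n : ℝ) + 1) - 1 / (z + n) ^ 1)
    (summable_one_div_add_pow le_rfl ha) isOpen_Ioi isPreconnected_Ioi
    (fun n z (hz : x / 2 < z) => (hasDerivAt_one_div_add_pow 1 (hpos n hz)).const_sub _)
    (fun n z (hz : x / 2 < z) => by
      simp only [norm_neg, Nat.cast_one, one_mul]
      rw [Real.norm_of_nonneg (by have := hpos n hz; positivity)]
      exact one_div_add_pow_le ha hz.le n 2)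
    hmem (by simpa using summable_digamma_terms hx) hmem
  simpa [hurwitzSeries] using h

lemma psi_eq_tsum (hx : 0 < x) :
    psi x = -eulerMascheroniConstant + ∑' n : ℕ, (1 / ((n : ℝ) + 1) - 1 / (x + n)) := by
  have hpartial : ∀ N : ℕ, ∑ n ∈ Finset.range N, (1 / ((n : ℝ) + 1) - 1 / (x + n)) =
      psi x + ((harmonic N : ℝ) - log N) - (psi (x + N) - log N) := by
    intro N
    rw [psi_add_nat hx, Finset.sum_sub_distrib, harmonic]
    push_cast
    simp only [one_div]
    ring
  have hlim : Tendsto (fun N : ℕ => ∑ n ∈ Finset.range N, (1 / ((n : ℝ) + 1) - 1 / (x + n)))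
      atTop (𝓝 (psi x + eulerMascheroniConstant - 0)) := by
    have hpsi : Tendsto (fun N : ℕ => psi (x + N) - log N) atTop (𝓝 0) := by
      refine ((tendsto_psi_sub_log (-x)).comp
        (tendsto_atTop_add_const_left atTop x tendsto_natCast_atTop_atTop)).congr fun N => ?_
      simp
    simp_rw [hpartial]
    exact (tendsto_harmonic_sub_log.const_add _).sub hpsi
  linarith [tendsto_nhds_unique (summable_digamma_terms hx).hasSum.tendsto_sum_nat hlim]

lemma hasDerivAt_psi (hx : 0 < x) : HasDerivAt psi (hurwitzSeries 2 x) x := by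
  refine ((hasDerivAt_tsum_digamma_terms hx).const_add
    (-eulerMascheroniConstant)).congr_of_eventuallyEq ?_
  filter_upwards [eventually_gt_nhds hx] with z hz using psi_eq_tsum hz

end DigammaSeries

section Trigamma

variable {y : ℝ}

lemma one_div_add_one_div_lt_hurwitzSeries_two (hy : 0 < y) :
    1 / y + 1 / (2 * y ^ 2) < hurwitzSeries 2 y := by
  suffices 0 < hurwitzSeries 2 y - 1 / y - 1 / (2 * y ^ 2) by linarith
  refine pos_of_add_one_lt_of_tendsto_zero
    (g := fun z => hurwitzSeries 2 z - 1 / z - 1 / (2 * z ^ 2)) (fun z hyz => ?_) ?_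
  · have hz : 0 < z := by linarith
    have key : 1 / z ^ 2 - 1 / z - 1 / (2 * z ^ 2) + 1 / (z + 1) + 1 / (2 * (z + 1) ^ 2)
        = 1 / (2 * z ^ 2 * (z + 1) ^ 2) := by
      field_simp; ring
    have : 0 < 1 / (2 * z ^ 2 * (z + 1) ^ 2) := by positivity
    rw [hurwitzSeries_eq_add le_rfl hz]
    linarith
  · have hinv : Tendsto (fun n : ℕ => (y + n)⁻¹) atTop (𝓝 0) :=
      (tendsto_atTop_add_const_left atTop y tendsto_natCast_atTop_atTop).inv_tendsto_atTop
    have h := ((tendsto_hurwitzSeries_add_nat 2 y).sub hinv).sub ((hinv.pow 2).div_const 2)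
    norm_num at h
    refine h.congr fun n => ?_
    have : y + n ≠ 0 := by positivity
    field_simp

lemma two_mul_hurwitzSeries_three_lt_sq (hy : 0 < y) :
    2 * hurwitzSeries 3 y < hurwitzSeries 2 y ^ 2 := by
  suffices 0 < hurwitzSeries 2 y ^ 2 - 2 * hurwitzSeries 3 y by linarith
  refine pos_of_add_one_lt_of_tendsto_zero
    (g := fun z => hurwitzSeries 2 z ^ 2 - 2 * hurwitzSeries 3 z) (fun z hyz => ?_) ?_
  · have hz : 0 < z := by linarith
    have hgap := mul_lt_mul_of_pos_right (one_div_add_one_div_lt_hurwitzSeries_two hz)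
      (by positivity : (0:ℝ) < 2 / z ^ 2)
    have key : (1 / z + 1 / (2 * z ^ 2)) * (2 / z ^ 2) = 2 / z ^ 3 + 1 / z ^ 4 := by
      field_simp
    rw [hurwitzSeries_eq_add le_rfl hz] at hgap
    rw [hurwitzSeries_eq_add le_rfl hz, hurwitzSeries_eq_add (by norm_num : 2 ≤ 3) hz]
    linear_combination hgap + key
  · simpa using ((tendsto_hurwitzSeries_add_nat 2 y).pow 2).sub
      ((tendsto_hurwitzSeries_add_nat 3 y).const_mul 2)

lemma strictAntiOn_inv_hurwitzSeries_two_sub :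
    StrictAntiOn (fun z => (hurwitzSeries 2 z)⁻¹ - z) (Ioi 0) := by
  have hderiv : ∀ z ∈ Ioi (0 : ℝ), HasDerivAt (fun z => (hurwitzSeries 2 z)⁻¹ - z)
      (2 * hurwitzSeries 3 z / hurwitzSeries 2 z ^ 2 - 1) z := fun z (hz : 0 < z) => by
    have h := ((hasDerivAt_hurwitzSeries le_rfl hz).inv (hurwitzSeries_pos le_rfl hz).ne').sub
      (hasDerivAt_id z)
    exact h.congr_deriv (by push_cast; ring)
  refine strictAntiOn_of_deriv_neg (convex_Ioi 0)
    (fun z hz => (hderiv z hz).continuousAt.continuousWithinAt) fun z hz => ?_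
  rw [interior_Ioi] at hz
  have hP := hurwitzSeries_pos le_rfl hz
  rw [(hderiv z hz).deriv, sub_neg, div_lt_one (by positivity)]
  exact two_mul_hurwitzSeries_three_lt_sq hz

end Trigamma

lemma log_add_half_lt_psi_add_one {x : ℝ} (hx : -(1 / 2) < x) :
    log (x + 1 / 2) < psi (x + 1) := by
  suffices 0 < psi (x + 1) - log (x + 1 / 2) by linarith
  refine pos_of_add_one_lt_of_tendsto_zero (g := fun y => psi (y + 1) - log (y + 1 / 2))
    (fun z hz => ?_) ?_
  · have hmid := inv_lt_log_add_half_sub_log_sub_half (y := z + 1) (by linarith)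
    rw [psi_add_one (by linarith : 0 < z + 1)]
    ring_nf at hmid ⊢
    linarith
  · have h := (tendsto_psi_sub_log (-(1 / 2))).comp
      (tendsto_atTop_add_const_right atTop (x + 1) tendsto_natCast_atTop_atTop)
    refine h.congr fun n => ?_
    simp only [Function.comp_apply]
    ring_nf

lemma psi_add_one_lt_log_add_exp {x : ℝ} (hx : 0 < x) :
    psi (x + 1) < log (x + exp (-eulerMascheroniConstant)) := by
  set c := exp (-eulerMascheroniConstant) with hc
  have hc0 : 0 < c := exp_pos _
  suffices psi (x + 1) - log (x + c) < 0 by linarith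
  refine neg_of_deriv_sign_change (F := fun y => psi (y + 1) - log (y + c))
    (F' := fun y => hurwitzSeries 2 (y + 1) - (y + c)⁻¹) (fun y hy => ?_) ?_ ?_ ?_ hx
  · exact ((hasDerivAt_psi (by linarith)).comp_add_const y 1).sub
      ((hasDerivAt_log (by linarith : y + c ≠ 0)).comp_add_const y c)
  · simp [psi_one, hc]
  · refine ((tendsto_psi_sub_log (c - 1)).comp
      (tendsto_atTop_add_const_right atTop 1 tendsto_id)).congr fun y => ?_
    simp only [Function.comp_apply, id]
    ring_nf
  · -- `F' y ≥ 0` says `1/ψ'(y+1) - (y+1) ≤ c - 1`, and this drops strictly below `c - 1` at `z`.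
    intro y z hy hyz hFy
    have hP := hurwitzSeries_pos le_rfl (by linarith : (0:ℝ) < y + 1)
    have hanti := strictAntiOn_inv_hurwitzSeries_two_sub (show (0:ℝ) < y + 1 by linarith)
      (show (0:ℝ) < z + 1 by linarith) (by linarith)
    have hP' := hurwitzSeries_pos le_rfl (by linarith : (0:ℝ) < z + 1)
    simp only [sub_nonneg] at hanti hFy ⊢
    rw [sub_pos, ← inv_lt_comm₀ hP' (by linarith)]
    linarith [(inv_le_comm₀ (by linarith) hP).1 hFy]

theorem psi_sharp_bounds (x : ℝ) (hx : 0 < x) :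
    Real.log (x + 1/2) - 1/x < psi x ∧
      psi x < Real.log (x + Real.exp (-Real.eulerMascheroniConstant)) - 1/x := by
  have hlower := log_add_half_lt_psi_add_one (x := x) (by linarith)
  have hupper := psi_add_one_lt_log_add_exp hx
  rw [psi_add_one hx] at hlower hupper
  constructor <;> linarith
end

section
/- For every natural number n ≥ 1, ln(n + 1/2) + γ < H_n ≤ ln(n + e^{1−γ} − 1) + γ, where H_n = ∑_{k=1}^n 1/k is the n-th harmonic number. -/
/-!
For every `a`, `H_n - log (n + a) → γ`. For `a = 1/2` the sequence strictly decreases, because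
`log (1 + 1/(n + 1/2))` exceeds `1/(n+1)`, the first term of its series in powers of `1/(2n+2)`;
this is the lower bound. For `a ≥ 0.522` it increases from `n = 3` on, by a Taylor bound for
`exp (1/(n+1))`. Taking `a = c := exp (1 - γ) - 1` gives the upper bound for `n ≥ 3`, once
`γ < H_4 - log (9/2)` shows `c ≥ 0.522`. The case `n = 1` is an equality, and `n = 2`, where the
sequence for `c` is still decreasing, follows from the estimate `γ ≥ H_3 - log 3.522`.
-/

open Real Filter Set

open Topology

noncomputable def harmonicSubLog (a : ℝ) (n : ℕ) : ℝ := harmonic n - log (n + a)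

lemma tendsto_harmonicSubLog (a : ℝ) :
    Tendsto (harmonicSubLog a) atTop (𝓝 eulerMascheroniConstant) := by
  have h := tendsto_harmonic_sub_log.sub
    ((tendsto_log_comp_add_sub_log a).comp tendsto_natCast_atTop_atTop)
  rw [sub_zero] at h
  refine h.congr fun n => ?_
  simp only [harmonicSubLog, Function.comp_apply]
  ring

lemma harmonicSubLog_succ {a : ℝ} {n : ℕ} (h : 0 < n + a) :
    harmonicSubLog a (n + 1) = harmonicSubLog a n + 1 / (n + 1) - log (1 + (n + a)⁻¹) := by
  have : (1 : ℝ) + (n + a)⁻¹ = (n + 1 + a) / (n + a) := by field_simp; ring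
  rw [this, log_div (by linarith) h.ne']
  simp only [harmonicSubLog, harmonic_succ]
  push_cast
  ring

lemma two_div_lt_log_one_add_inv {a : ℝ} (ha : 0 < a) : 2 / (2 * a + 1) < log (1 + a⁻¹) := by
  have hsum := hasSum_log_one_add_inv ha
  have hle := sum_le_hasSum (Finset.range 2) (fun k _ => by positivity) hsum
  have hsecond : 0 < ((2 * a + 1) ^ 3)⁻¹ := by positivity
  norm_num [Finset.sum_range_succ] at hle
  rw [div_eq_mul_inv]
  linarith

lemma strictAnti_harmonicSubLog_half : StrictAnti (harmonicSubLog (1 / 2)) := by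
  refine strictAnti_nat_of_succ_lt fun n => ?_
  have hpos : (0 : ℝ) < n + 1 / 2 := by positivity
  have hlog := two_div_lt_log_one_add_inv hpos
  have : 2 / (2 * ((n : ℝ) + 1 / 2) + 1) = 1 / (n + 1) := by field_simp; ring
  rw [harmonicSubLog_succ hpos]
  linarith

lemma eulerMascheroniConstant_lt_harmonicSubLog_half (n : ℕ) :
    eulerMascheroniConstant < harmonicSubLog (1 / 2) n :=
  (strictAnti_harmonicSubLog_half.antitone.le_of_tendsto (tendsto_harmonicSubLog _) (n + 1)).trans_lt
    (strictAnti_harmonicSubLog_half n.lt_succ_self)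

-- `0.522` lies just above `0.5208`, the least `a` for which the step from `n = 3` to `n = 4`
-- increases `H_n - log (n + a)`, and below `exp (1 - γ) - 1 ≈ 0.5262`.
lemma one_add_mul_le_one_sub_mul_mul_exp {t : ℝ} (h0 : 0 ≤ t) (h1 : t ≤ 1 / 4) :
    1 + 0.522 * t ≤ (1 - 0.478 * t) * exp t := by
  have hexp := sum_le_exp_of_nonneg h0 5
  simp only [Finset.sum_range_succ, Finset.sum_range_zero, Nat.factorial] at hexp
  norm_num at hexp
  nlinarith [mul_le_mul_of_nonneg_left hexp (by linarith : (0 : ℝ) ≤ 1 - 0.478 * t),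
    pow_nonneg h0 2, pow_nonneg h0 3, pow_nonneg h0 4, pow_nonneg h0 5]

lemma log_one_add_inv_le_one_div_add_one {x a : ℝ} (hx : 3 ≤ x) (ha : 0.522 ≤ a) :
    log (1 + (x + a)⁻¹) ≤ 1 / (x + 1) := by
  set t := 1 / (x + 1) with ht
  have hx1 : 0 < x + 1 := by linarith
  have ht0 : 0 ≤ t := by positivity
  have ht1 : t ≤ 1 / 4 := by rw [ht, div_le_div_iff₀ hx1 (by norm_num)]; linarith
  rw [log_le_iff_le_exp (by positivity)]
  calc 1 + (x + a)⁻¹ ≤ 1 + (x + 0.522)⁻¹ := by gcongr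
    _ = (1 + 0.522 * t) / (1 - 0.478 * t) := by
        have : x + 0.522 ≠ 0 := by linarith
        have : x + 1 - 0.478 ≠ 0 := by linarith
        rw [ht]; field_simp; ring
    _ ≤ exp t := by
        rw [div_le_iff₀ (by nlinarith)]
        linarith [one_add_mul_le_one_sub_mul_mul_exp ht0 ht1]

lemma harmonicSubLog_le_eulerMascheroniConstant {a : ℝ} (ha : 0.522 ≤ a) {n : ℕ} (hn : 3 ≤ n) :
    harmonicSubLog a n ≤ eulerMascheroniConstant := by
  have hmono : Monotone fun m => harmonicSubLog a (m + n) := by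
    refine monotone_nat_of_le_succ fun m => ?_
    have hx : (3 : ℝ) ≤ (m + n : ℕ) := by exact_mod_cast (by omega : 3 ≤ m + n)
    have hpos : (0 : ℝ) < (m + n : ℕ) + a := by linarith
    rw [show m + 1 + n = m + n + 1 by ring, harmonicSubLog_succ hpos]
    linarith [log_one_add_inv_le_one_div_add_one hx ha]
  simpa using hmono.ge_of_tendsto ((tendsto_add_atTop_iff_nat n).2 (tendsto_harmonicSubLog a)) 0

lemma exp_thirteen_twelfths_lt : exp (13 / 12) < 2.956 := by
  have he := exp_one_lt_d9
  have h12 := exp_bound' (x := 1 / 12) (by norm_num) (by norm_num) (n := 3) (by norm_num)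
  norm_num [Finset.sum_range_succ, Nat.factorial] at h12
  rw [show (13 / 12 : ℝ) = 1 + 1 / 12 by norm_num, exp_add]
  nlinarith [exp_pos 1, exp_pos (1 / 12)]

lemma exp_half_lt : exp (1 / 2) < 1.6491 := by
  have h := exp_bound' (x := 1 / 2) (by norm_num) (by norm_num) (n := 4) (by norm_num)
  norm_num [Finset.sum_range_succ, Nat.factorial] at h
  linarith

lemma lt_exp_five_sixths : 2.297 < exp (5 / 6) := by
  have h := sum_le_exp_of_nonneg (x := 5 / 6) (by norm_num) 5
  norm_num [Finset.sum_range_succ, Nat.factorial] at h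
  linarith

lemma le_exp_one_sub_eulerMascheroniConstant_sub_one :
    0.522 ≤ exp (1 - eulerMascheroniConstant) - 1 := by
  have hγ := eulerMascheroniConstant_lt_harmonicSubLog_half 4
  norm_num [harmonicSubLog, harmonic, Finset.sum_range_succ] at hγ
  have hexp : exp (log (9 / 2) - 13 / 12) ≤ exp (1 - eulerMascheroniConstant) :=
    exp_le_exp.2 (by linarith)
  rw [exp_sub, exp_log (by norm_num), div_le_iff₀ (exp_pos _)] at hexp
  nlinarith [mul_lt_mul_of_pos_left exp_thirteen_twelfths_lt (exp_pos (1 - eulerMascheroniConstant))]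

lemma three_halves_le_log_one_add_exp_one_sub_add :
    3 / 2 ≤ log (1 + exp (1 - eulerMascheroniConstant)) + eulerMascheroniConstant := by
  set γ := eulerMascheroniConstant
  have hγ := harmonicSubLog_le_eulerMascheroniConstant (le_refl 0.522) (le_refl 3)
  norm_num [harmonicSubLog, harmonic, Finset.sum_range_succ] at hγ
  have hs : exp (1 - γ) * exp (5 / 6) ≤ 3.522 := by
    rw [← exp_add, ← exp_log (by norm_num : (0 : ℝ) < 3.522)]
    exact exp_le_exp.2 (by linarith)
  have hsplit : exp (3 / 2 - γ) = exp (1 / 2) * exp (1 - γ) := by rw [← exp_add]; ring_nf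
  rw [← sub_le_iff_le_add, le_log_iff_exp_le (by positivity), hsplit]
  nlinarith [exp_half_lt, lt_exp_five_sixths, exp_pos (1 - γ)]

lemma harmonicSubLog_exp_one_sub_sub_one_le {n : ℕ} (hn : 1 ≤ n) :
    harmonicSubLog (exp (1 - eulerMascheroniConstant) - 1) n ≤ eulerMascheroniConstant := by
  rcases (by omega : n = 1 ∨ n = 2 ∨ 3 ≤ n) with rfl | rfl | hn
  · simp [harmonicSubLog]
  · have h := three_halves_le_log_one_add_exp_one_sub_add
    norm_num [harmonicSubLog, harmonic, Finset.sum_range_succ]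
    rw [show (2 : ℝ) + (exp (1 - eulerMascheroniConstant) - 1)
      = 1 + exp (1 - eulerMascheroniConstant) by ring]
    linarith
  · exact harmonicSubLog_le_eulerMascheroniConstant
      le_exp_one_sub_eulerMascheroniConstant_sub_one hn

theorem harmonic_sharp_bounds (n : ℕ) (hn : 1 ≤ n) :
    Real.log ((n : ℝ) + 1/2) + Real.eulerMascheroniConstant <
        ∑ k ∈ Finset.range n, (1 : ℝ) / (k + 1) ∧
      ∑ k ∈ Finset.range n, (1 : ℝ) / (k + 1) ≤
        Real.log ((n : ℝ) + Real.exp (1 - Real.eulerMascheroniConstant) - 1) +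
          Real.eulerMascheroniConstant := by
  have hsum : ∑ k ∈ Finset.range n, (1 : ℝ) / (k + 1) = harmonic n := by simp [harmonic]
  have hlower := eulerMascheroniConstant_lt_harmonicSubLog_half n
  have hupper := harmonicSubLog_exp_one_sub_sub_one_le hn
  rw [harmonicSubLog, ← hsum] at hlower hupper
  rw [add_sub_assoc]
  constructor <;> linarith
end

section
/- The function f₃(u) = [1 + (1 − u)²]·e^u − 2 is strictly positive for every u ∈ (0, 1/2]. -/
/-! The quadratic Taylor polynomial of `exp` is a lower bound on `[0, ∞)`, and
`(1 + (1 - u)²)(1 + u + u²/2) = 2 + u⁴/2`, so `f₃(u) ≥ u⁴/2 > 0` for every `u > 0`. -/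

open Real

lemma two_add_pow_four_div_two_le_mul_exp (u : ℝ) (hu : 0 ≤ u) :
    2 + u ^ 4 / 2 ≤ (1 + (1 - u) ^ 2) * exp u :=
  calc 2 + u ^ 4 / 2 = (1 + (1 - u) ^ 2) * (1 + u + u ^ 2 / 2) := by ring
    _ ≤ (1 + (1 - u) ^ 2) * exp u :=
      mul_le_mul_of_nonneg_left (quadratic_le_exp_of_nonneg hu) (by positivity)

theorem f3_pos (u : ℝ) (hu : u ∈ Set.Ioc (0 : ℝ) (1/2)) :
    0 < (1 + (1 - u)^2) * Real.exp u - 2 := by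
  have hu₀ : 0 < u := hu.1
  linarith [two_add_pow_four_div_two_le_mul_exp u hu₀.le, pow_pos hu₀ 4]
end

section
/- The function f(x) = ln(x + 1/2) + γ − [1 + ln(√e − 1) − ln(e^{1/(x+1)} − 1)] is increasing on [1, ∞), where γ is the Euler–Mascheroni constant. -/
/-! With `t = 1 / (x + 1)`, which ranges over `(0, 2)` for `x > -1/2`, the inequality `f' x ≥ 0`
becomes `2 ≤ exp t * (2 - 2 t + t²)`. This follows from `exp t ≥ 1 + t + t² / 2`, because
`(1 + t + t² / 2) * (2 - 2 t + t²) = 2 + t⁴ / 2`. -/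

open Real Set

lemma two_le_exp_mul_quadratic {t : ℝ} (ht : 0 ≤ t) : 2 ≤ exp t * (2 - 2 * t + t ^ 2) :=
  calc (2 : ℝ) ≤ (1 + t + t ^ 2 / 2) * (2 - 2 * t + t ^ 2) := by nlinarith [sq_nonneg (t ^ 2)]
    _ ≤ exp t * (2 - 2 * t + t ^ 2) :=
      mul_le_mul_of_nonneg_right (quadratic_le_exp_of_nonneg ht) (by nlinarith [sq_nonneg (1 - t)])

noncomputable def f (x : ℝ) : ℝ :=
  log (x + 1/2) + eulerMascheroniConstant -
    (1 + log (sqrt (exp 1) - 1) - log (exp (1/(x + 1)) - 1))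

lemma hasDerivAt_f {x : ℝ} (hx : -(1/2) < x) :
    HasDerivAt f (1 / (x + 1/2) - exp (1/(x + 1)) / ((x + 1) ^ 2 * (exp (1/(x + 1)) - 1))) x := by
  have hx1 : x + 1 ≠ 0 := by linarith
  have hexp : exp (1/(x + 1)) - 1 ≠ 0 := by
    rw [sub_ne_zero, ne_eq, exp_eq_one_iff]; simpa using hx1
  have hlog₁ : HasDerivAt (fun y => log (y + 1/2)) (1 / (x + 1/2)) x :=
    ((hasDerivAt_id x).add_const _).log (by simp; linarith)
  have hinv : HasDerivAt (fun y => 1 / (y + 1)) (-1 / (x + 1) ^ 2) x := by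
    simpa [one_div] using ((hasDerivAt_id x).add_const 1).fun_inv hx1
  have hlog₂ : HasDerivAt (fun y => log (exp (1/(y + 1)) - 1))
      (exp (1/(x + 1)) * (-1 / (x + 1) ^ 2) / (exp (1/(x + 1)) - 1)) x :=
    (hinv.exp.sub_const 1).log hexp
  refine ((hlog₁.add_const _).sub ((hasDerivAt_const x _).sub hlog₂)).congr_deriv ?_
  field_simp
  ring

lemma deriv_f_nonneg {x : ℝ} (hx : -(1/2) < x) :
    0 ≤ 1 / (x + 1/2) - exp (1/(x + 1)) / ((x + 1) ^ 2 * (exp (1/(x + 1)) - 1)) := by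
  have hx1 : x + 1 ≠ 0 := by linarith
  set t := 1 / (x + 1) with ht
  have ht0 : 0 < t := one_div_pos.2 (by linarith)
  have ht2 : t < 2 := by rw [ht, div_lt_iff₀ (by linarith)]; linarith
  have hexp : 0 < exp t - 1 := by rw [sub_pos, one_lt_exp_iff]; exact ht0
  have hx_half : x + 1/2 = (2 - t) / (2 * t) := by rw [ht]; field_simp; ring
  have hx_one : (x + 1) ^ 2 = 1 / t ^ 2 := by rw [ht]; field_simp
  rw [hx_half, hx_one, one_div_div, sub_nonneg, div_le_div_iff₀ (by positivity) (by linarith)]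
  field_simp
  nlinarith [two_le_exp_mul_quadratic ht0.le]

lemma f_monotoneOn_Ioi : MonotoneOn f (Ioi (-(1/2))) := by
  have hdiff : ∀ x ∈ Ioi (-(1/2) : ℝ), DifferentiableAt ℝ f x :=
    fun x hx => (hasDerivAt_f hx).differentiableAt
  refine monotoneOn_of_deriv_nonneg (convex_Ioi _)
    (fun x hx => (hdiff x hx).continuousAt.continuousWithinAt) ?_ ?_ <;> rw [interior_Ioi]
  · exact fun x hx => (hdiff x hx).differentiableWithinAt
  · exact fun x hx => (hasDerivAt_f hx).deriv ▸ deriv_f_nonneg hx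

theorem f_monotoneOn :
    MonotoneOn (fun x : ℝ =>
      Real.log (x + 1/2) + Real.eulerMascheroniConstant -
        (1 + Real.log (Real.sqrt (Real.exp 1) - 1) -
          Real.log (Real.exp (1/(x + 1)) - 1))) (Set.Ici (1 : ℝ)) :=
  f_monotoneOn_Ioi.mono (Ici_subset_Ioi.2 (by norm_num))
end

section
/- For every natural number n ≥ 3, ln(n + 1/2) + γ > 1 + ln(√e − 1) − ln(e^{1/(n+1)} − 1); that is, for n ≥ 3 the lower bound ln(n + 1/2) + γ for the n-th harmonic number H_n is better than the lower bound 1 + ln(√e − 1) − ln(e^{1/(n+1)} − 1). -/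
/-!
Both analytic inputs are `u ≤ sinh u` for `u ≥ 0`. With `u = x / 2` it gives
`log (exp x - 1) ≥ log x + x / 2`; with `u = log y` it gives `log y ≤ (y - y⁻¹) / 2`, which bounds
`log ((n + 1) / (n + 1/2))` by `1 / (2 (n + 1)) + 1 / (4 (2n + 1)(n + 1))` and shows that
`H_m - log (m + 1) + 1 / (2 (m + 1))` increases to `γ`. For `x = 1 / (n + 1)` and `n ≥ 3` the left
side is therefore at most `1 + log (√e - 1) + log (n + 1/2) + 1/112`, and the case `m = 15` of
the bound on `γ` beats `1 + log (√e - 1) + 1/112` numerically.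
-/

open Real

namespace Real

lemma log_le_half_sub_inv {y : ℝ} (hy : 1 ≤ y) : log y ≤ (y - y⁻¹) / 2 := by
  have h := self_le_sinh_iff.mpr (log_nonneg hy)
  rwa [sinh_eq, exp_neg, exp_log (by linarith)] at h

lemma mul_exp_half_le_exp_sub_one {x : ℝ} (hx : 0 ≤ x) : x * exp (x / 2) ≤ exp x - 1 := by
  have h : x / 2 ≤ sinh (x / 2) := self_le_sinh_iff.mpr (by linarith)
  have hfactor : exp x - 1 = (exp (x / 2) - exp (-(x / 2))) * exp (x / 2) := by
    rw [sub_mul, ← exp_add, ← exp_add]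
    simp
  rw [sinh_eq] at h
  rw [hfactor]
  gcongr
  linarith

lemma log_add_half_le_log_exp_sub_one {x : ℝ} (hx : 0 < x) :
    log x + x / 2 ≤ log (exp x - 1) :=
  calc log x + x / 2 = log (x * exp (x / 2)) := by rw [log_mul hx.ne' (exp_pos _).ne', log_exp]
    _ ≤ log (exp x - 1) := log_le_log (by positivity) (mul_exp_half_le_exp_sub_one hx.le)

lemma log_add_one_sub_log_add_half_le {t : ℝ} (ht : 0 ≤ t) :
    log (t + 1) - log (t + 1 / 2) ≤ 1 / (2 * (t + 1)) + 1 / (4 * (2 * t + 1) * (t + 1)) := by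
  have hy : 1 ≤ (t + 1) / (t + 1 / 2) := by rw [le_div_iff₀ (by linarith)]; linarith
  rw [← log_div (by linarith) (by linarith)]
  refine (log_le_half_sub_inv hy).trans_eq ?_
  field_simp
  ring

lemma monotone_eulerMascheroniSeq_add_inv :
    Monotone fun m : ℕ ↦ eulerMascheroniSeq m + 1 / (2 * (m + 1)) := by
  refine monotone_nat_of_le_succ fun m ↦ ?_
  have hy : 1 ≤ ((m : ℝ) + 1 + 1) / (m + 1) := by rw [le_div_iff₀ (by positivity)]; linarith
  have hlog := log_le_half_sub_inv hy
  have hhalf : (((m : ℝ) + 1 + 1) / (m + 1) - (((m : ℝ) + 1 + 1) / (m + 1))⁻¹) / 2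
      = 1 / (2 * (m + 1)) + 1 / (2 * (m + 1 + 1)) := by
    field_simp
    ring
  rw [log_div (by positivity) (by positivity), hhalf] at hlog
  have hinv : ((m : ℝ) + 1)⁻¹ = 2 * (1 / (2 * (m + 1))) := by field_simp
  simp only [eulerMascheroniSeq, harmonic_succ]
  push_cast
  linarith

lemma eulerMascheroniSeq_add_le_eulerMascheroniConstant (m : ℕ) :
    eulerMascheroniSeq m + 1 / (2 * (m + 1)) ≤ eulerMascheroniConstant := by
  refine monotone_eulerMascheroniSeq_add_inv.ge_of_tendsto ?_ m
  have h := tendsto_eulerMascheroniSeq.add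
    ((tendsto_one_div_add_atTop_nhds_zero_nat).const_mul (1 / 2 : ℝ))
  convert h using 2 with k
  · field_simp
  · simp

lemma one_add_log_sqrt_exp_one_sub_one_lt :
    1 + log (√(exp 1) - 1) + 1 / 112 < eulerMascheroniConstant := by
  -- `γ ≥ H₁₅ - log 16 + 1/32 ≈ 0.57689` against `1 + log (√e - 1) + 1/112 ≈ 0.57618`; the number
  -- `2.34` separates `16 (√e - 1)` from `exp (H₁₅ + 1/32 - 1/112 - 1)`.
  have hγ := eulerMascheroniSeq_add_le_eulerMascheroniConstant 15
  have hseq : eulerMascheroniSeq 15 = 1195757 / 360360 - log 16 := by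
    norm_num [eulerMascheroniSeq, harmonic_succ]
  have hsqrt_gt : 1 < √(exp 1) := by
    rw [lt_sqrt zero_le_one]
    nlinarith [exp_one_gt_d9]
  have hsqrt_lt : √(exp 1) < 1.64873 := by
    rw [sqrt_lt' (by norm_num)]
    nlinarith [exp_one_lt_d9]
  have hexp : (10.3797 : ℝ) < exp 2.34 := by
    refine lt_of_lt_of_le ?_ (sum_le_exp_of_nonneg (by norm_num) 14)
    norm_num [Finset.sum_range_succ, Nat.factorial]
  have hlog : log (16 * (√(exp 1) - 1)) < 2.34 := by
    rw [← log_exp 2.34]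
    exact log_lt_log (by linarith) (by linarith)
  rw [log_mul (by norm_num) (by linarith)] at hlog
  norm_num at hγ hseq hlog ⊢
  linarith

end Real

theorem lower_bound_comparison (n : ℕ) (hn : 3 ≤ n) :
    1 + Real.log (Real.sqrt (Real.exp 1) - 1) -
        Real.log (Real.exp (1/((n : ℝ) + 1)) - 1) <
      Real.log ((n : ℝ) + 1/2) + Real.eulerMascheroniConstant := by
  have hn' : (3 : ℝ) ≤ n := by exact_mod_cast hn
  have hexp := log_add_half_le_log_exp_sub_one (x := 1 / ((n : ℝ) + 1)) (by positivity)
  rw [one_div, log_inv, ← one_div,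
    show 1 / ((n : ℝ) + 1) / 2 = 1 / (2 * (n + 1)) by field_simp] at hexp
  have hlog := log_add_one_sub_log_add_half_le (Nat.cast_nonneg (α := ℝ) n)
  have herr : 1 / (4 * (2 * (n : ℝ) + 1) * (n + 1)) ≤ 1 / 112 := by
    rw [div_le_div_iff₀ (by positivity) (by norm_num)]
    nlinarith
  have hγ := one_add_log_sqrt_exp_one_sub_one_lt
  linarith
end
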